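/- arXiv:1208.1787 — 2 statements merged into one kernel-verified Lean document; each statement's English description precedes it below -/
import Mathlib

section
/- Let $A=k[z_1,\dots,z_n]$, $R=A[x,y]/(xy)$. The quotient of $\Omega_{R/k}$ by its torsion submodule is isomorphic to $A[x]\,dx\oplus A[y]\,dy\oplus\bigoplus_{i=1}^n R\,dz_i$, where $\Omega_{R/k}=(R\,dx\oplus R\,dy\oplus\bigoplus_i R\,dz_i)/(x\,dy+y\,dx)$, and the torsion submodule is generated by the class of $x\,dy$. -/
set_option synthInstance.maxHeartbeats 1000000
set_option maxHeartbeats 1600000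

open MvPolynomial

/-- `R = k[z_1,…,z_n][x,y]/(xy)`, the coordinate ring of a simple normal crossing
(nodal) hypersurface. -/
noncomputable abbrev NodalRing (k : Type*) [Field k] (n : ℕ) :=
  MvPolynomial (Fin n ⊕ Bool) k ⧸
    (Ideal.span {(X (Sum.inr true) * X (Sum.inr false) : MvPolynomial (Fin n ⊕ Bool) k)})

/-- The embedding of `k[z_1,…,z_n][x,y]` into the normalization `A[x] × A[y]`
(`A = k[z_1,…,z_n]`): `z_i ↦ (z_i,z_i)`, `x ↦ (x,0)`, `y ↦ (0,y)`. -/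
noncomputable def nodalToNormalization (k : Type*) [Field k] (n : ℕ) :
    MvPolynomial (Fin n ⊕ Bool) k →ₐ[k]
      Polynomial (MvPolynomial (Fin n) k) × Polynomial (MvPolynomial (Fin n) k) :=
  aeval (fun i => match i with
    | Sum.inl j => (Polynomial.C (X j), Polynomial.C (X j))
    | Sum.inr true => (Polynomial.X, 0)
    | Sum.inr false => (0, Polynomial.X))

/-- The induced embedding `R = A[x,y]/(xy) → A[x] × A[y]` of the nodal ring into its
normalization. -/
noncomputable def nodalRingToNormalization (k : Type*) [Field k] (n : ℕ) :
    NodalRing k n →ₐ[k]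
      Polynomial (MvPolynomial (Fin n) k) × Polynomial (MvPolynomial (Fin n) k) :=
  Ideal.Quotient.liftₐ _ (nodalToNormalization k n) (by
    intro a ha
    rw [Ideal.mem_span_singleton] at ha
    obtain ⟨c, rfl⟩ := ha
    rw [map_mul, map_mul]
    have hx : nodalToNormalization k n (X (Sum.inr true)) = (Polynomial.X, 0) := by
      simp [nodalToNormalization]
    have hy : nodalToNormalization k n (X (Sum.inr false)) = (0, Polynomial.X) := by
      simp [nodalToNormalization]
    rw [hx, hy]
    rw [show ((Polynomial.X, 0) * (0, Polynomial.X) :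
        Polynomial (MvPolynomial (Fin n) k) × Polynomial (MvPolynomial (Fin n) k)) = 0 by
      ext <;> simp]
    rw [zero_mul])

/-!
The derivation `r ↦ ((∂ₓ r, ∂_y r), (∂_{z_i} r)ᵢ)` of `R` into `A[x] × A[y] × Rⁿ`, with `∂ₓ` and
`∂_y` computed on the two branches of the normalization, induces a surjection `L` from `Ω_{R/k}`.
A nonzerodivisor of `R` has nonzero image in both branches, so the target of `L` is torsion-free
and the torsion lies in `ker L`. Conversely, if `ω = a dx + b dy + ∑ cᵢ dzᵢ` lies in `ker L`, then
`c = 0`, `a ∈ (y)` and `b ∈ (x)`, so `ω ∈ R · x dy` because `x dy = -y dx`; and `x dy` is killed by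
the nonzerodivisor `x + y`.
-/

theorem Submodule.torsion_le_ker {R M N : Type*} [CommRing R] [AddCommGroup M] [Module R M]
    [AddCommGroup N] [Module R N] [Module.IsTorsionFree R N] (f : M →ₗ[R] N) :
    torsion R M ≤ LinearMap.ker f := by
  intro m hm
  obtain ⟨a, ha⟩ := (mem_torsion_iff m).1 hm
  refine (isRegular_iff_mem_nonZeroDivisors.2 a.2).isSMulRegular (M := N) ?_
  change (a : R) • f m = (a : R) • 0
  rw [← map_smul, ← Submonoid.smul_def, ha, map_zero, smul_zero]

theorem KaehlerDifferential.span_D_image_eq_top_of_adjoin_eq_top {R S : Type*} [CommRing R]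
    [CommRing S] [Algebra R S] {s : Set S} (hs : Algebra.adjoin R s = ⊤) :
    Submodule.span S (D R S '' s) = ⊤ := by
  rw [eq_top_iff, ← span_range_derivation, Submodule.span_le]
  rintro _ ⟨a, rfl⟩
  induction (hs ▸ Algebra.mem_top : a ∈ Algebra.adjoin R s) using Algebra.adjoin_induction with
  | mem a ha => exact Submodule.subset_span ⟨a, ha, rfl⟩
  | algebraMap r => simp
  | add a b _ _ ha hb => rw [map_add]; exact add_mem ha hb
  | mul a b _ _ ha hb =>
    rw [Derivation.leibniz]; exact add_mem (Submodule.smul_mem _ _ hb) (Submodule.smul_mem _ _ ha)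

namespace Derivation

variable {R A M N : Type*} [CommSemiring R] [CommSemiring A] [Algebra R A]
  [AddCommMonoid M] [Module A M] [Module R M] [AddCommMonoid N] [Module A N] [Module R N]

noncomputable def prod (d₁ : Derivation R A M) (d₂ : Derivation R A N) :
    Derivation R A (M × N) where
  toLinearMap := d₁.toLinearMap.prod d₂.toLinearMap
  map_one_eq_zero' := Prod.ext d₁.map_one_eq_zero d₂.map_one_eq_zero
  leibniz' a b := Prod.ext (d₁.leibniz a b) (d₂.leibniz a b)

@[simp]
theorem prod_apply (d₁ : Derivation R A M) (d₂ : Derivation R A N) (a : A) :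
    d₁.prod d₂ a = (d₁ a, d₂ a) := rfl

variable {ι : Type*} {P : ι → Type*} [∀ i, AddCommMonoid (P i)] [∀ i, Module A (P i)]
  [∀ i, Module R (P i)]

noncomputable def pi (d : ∀ i, Derivation R A (P i)) : Derivation R A (∀ i, P i) where
  toLinearMap := LinearMap.pi fun i => (d i).toLinearMap
  map_one_eq_zero' := funext fun i => (d i).map_one_eq_zero
  leibniz' a b := funext fun i => (d i).leibniz a b

@[simp]
theorem pi_apply (d : ∀ i, Derivation R A (P i)) (a : A) (i : ι) : pi d a i = d i a := rfl

end Derivation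

namespace NodalRing

variable {k : Type*} [Field k] {n : ℕ}

noncomputable abbrev var (w : Fin n ⊕ Bool) : NodalRing k n := Ideal.Quotient.mk _ (X w)

variable (k n) in
abbrev Normalization :=
  Polynomial (MvPolynomial (Fin n) k) × Polynomial (MvPolynomial (Fin n) k)

local notation "ψ" => nodalRingToNormalization k n
local notation "𝗑" => (var (Sum.inr true) : NodalRing k n)
local notation "𝗒" => (var (Sum.inr false) : NodalRing k n)

noncomputable instance : Module (NodalRing k n) (Normalization k n) :=
  Module.compHom _ (nodalRingToNormalization k n).toRingHom

theorem smul_normalization_def (r : NodalRing k n) (m : Normalization k n) : r • m = ψ r * m :=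
  rfl

instance : IsScalarTower k (NodalRing k n) (Normalization k n) :=
  ⟨fun c r m => by
    rw [smul_normalization_def, smul_normalization_def, map_smul, Algebra.smul_mul_assoc]⟩

@[simp]
theorem nodalRingToNormalization_var (w : Fin n ⊕ Bool) :
    ψ (var w) = nodalToNormalization k n (X w) := rfl

@[simp]
theorem nodalToNormalization_X_inl (j : Fin n) :
    nodalToNormalization k n (X (.inl j)) = (.C (X j), .C (X j)) := by
  simp [nodalToNormalization]

@[simp]
theorem nodalToNormalization_X_x : nodalToNormalization k n (X (.inr true)) = (.X, 0) := by
  simp [nodalToNormalization]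

@[simp]
theorem nodalToNormalization_X_y : nodalToNormalization k n (X (.inr false)) = (0, .X) := by
  simp [nodalToNormalization]

theorem x_mul_y : 𝗑 * 𝗒 = 0 :=
  Ideal.Quotient.eq_zero_iff_mem.2 (Ideal.subset_span rfl)

theorem var_mul_var_not (b : Bool) : var (.inr b) * var (.inr !b) = (0 : NodalRing k n) := by
  cases b
  · rw [mul_comm]; exact x_mul_y
  · exact x_mul_y

variable (k n) in
noncomputable def branch (b : Bool) :
    Normalization k n →+* Polynomial (MvPolynomial (Fin n) k) :=
  cond b (RingHom.fst _ _) (RingHom.snd _ _)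

variable (k n) in
noncomputable def branchSection (b : Bool) :
    Polynomial (MvPolynomial (Fin n) k) →+* MvPolynomial (Fin n ⊕ Bool) k :=
  Polynomial.eval₂RingHom (aeval fun j => X (.inl j)).toRingHom (X (.inr b))

theorem branch_var_self (b : Bool) : branch k n b (ψ (var (.inr b))) = .X := by
  cases b <;> simp [branch]

theorem branch_comp_branchSection (b : Bool) :
    (branch k n b).comp ((nodalToNormalization k n).toRingHom.comp (branchSection k n b)) =
      RingHom.id _ := by
  apply Polynomial.ringHom_ext'
  · apply MvPolynomial.ringHom_ext <;> intros <;> cases b <;> simp [branch, branchSection]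
  · cases b <;> simp [branch, branchSection]

theorem mk_comp_branchSection (b : Bool) :
    (Ideal.Quotient.mk (Ideal.span {(X (.inr !b) : MvPolynomial (Fin n ⊕ Bool) k)})).comp
        ((branchSection k n b).comp ((branch k n b).comp (nodalToNormalization k n).toRingHom)) =
      Ideal.Quotient.mk (Ideal.span {(X (.inr !b) : MvPolynomial (Fin n ⊕ Bool) k)}) := by
  apply MvPolynomial.ringHom_ext
  · intro; cases b <;> simp [branch, branchSection]
  · rintro (j | c) <;> cases b <;> (try cases c) <;>
      simp [branch, branchSection, eq_comm (a := (0 : _ ⧸ _)), Ideal.Quotient.eq_zero_iff_mem]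

theorem exists_eq_var_mul_of_branch_eq_zero {b : Bool} {r : NodalRing k n}
    (h : branch k n b (ψ r) = 0) : ∃ s, r = var (.inr !b) * s := by
  obtain ⟨f, rfl⟩ := Ideal.Quotient.mk_surjective r
  have hf := RingHom.congr_fun (mk_comp_branchSection (k := k) (n := n) b) f
  simp only [RingHom.comp_apply, AlgHom.toRingHom_eq_coe, RingHom.coe_coe] at hf
  rw [show ψ (Ideal.Quotient.mk _ f) = nodalToNormalization k n f from rfl] at h
  rw [h, map_zero, map_zero, eq_comm, Ideal.Quotient.eq_zero_iff_mem,
    Ideal.mem_span_singleton] at hf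
  obtain ⟨c, rfl⟩ := hf
  exact ⟨Ideal.Quotient.mk _ c, map_mul _ _ _⟩

theorem nodalRingToNormalization_injective : Function.Injective ψ := by
  refine (injective_iff_map_eq_zero _).2 fun r hr => ?_
  obtain ⟨s, rfl⟩ := exists_eq_var_mul_of_branch_eq_zero (b := true) (by rw [hr, map_zero])
  have hs : branch k n false (ψ s) = 0 := by
    simpa [branch] using congrArg (branch k n false) hr
  obtain ⟨u, rfl⟩ := exists_eq_var_mul_of_branch_eq_zero hs
  show var (.inr false) * (var (.inr !false) * u) = 0
  rw [← mul_assoc, var_mul_var_not false, zero_mul]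

theorem isRegular_nodalRingToNormalization {r : NodalRing k n} (hr : IsRegular r) :
    IsRegular (ψ r) := by
  have hne (b : Bool) : branch k n b (ψ r) ≠ 0 := fun h => by
    obtain ⟨s, rfl⟩ := exists_eq_var_mul_of_branch_eq_zero h
    have hb : var (.inr b) = (0 : NodalRing k n) := hr.right <| by
      show var (.inr b) * (var (.inr !b) * s) = 0 * _
      rw [← mul_assoc, var_mul_var_not, zero_mul, zero_mul]
    exact Polynomial.X_ne_zero (R := MvPolynomial (Fin n) k)
      (by simpa [hb] using (branch_var_self (k := k) (n := n) b).symm)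
  exact Prod.isRegular_mk.2
    ⟨isRegular_iff_ne_zero.2 (hne true), isRegular_iff_ne_zero.2 (hne false)⟩

instance : Module.IsTorsionFree (NodalRing k n) (Normalization k n) :=
  .comap ψ (fun _ => isRegular_nodalRingToNormalization) fun _ _ => rfl

theorem x_add_y_mem_nonZeroDivisors : 𝗑 + 𝗒 ∈ nonZeroDivisors (NodalRing k n) := by
  refine mem_nonZeroDivisors_of_injective nodalRingToNormalization_injective ?_
  rw [← isRegular_iff_mem_nonZeroDivisors, map_add]
  simp only [nodalRingToNormalization_var, nodalToNormalization_X_x, nodalToNormalization_X_y,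
    Prod.mk_add_mk, add_zero, zero_add]
  exact Prod.isRegular_mk.2 ⟨isRegular_iff_ne_zero.2 Polynomial.X_ne_zero,
    isRegular_iff_ne_zero.2 Polynomial.X_ne_zero⟩

theorem mkₐ_pderiv_inl_eq_zero (i : Fin n) {f : MvPolynomial (Fin n ⊕ Bool) k}
    (hf : Ideal.Quotient.mkₐ k (Ideal.span {X (.inr true) * X (.inr false)}) f = 0) :
    Ideal.Quotient.mkₐ k (Ideal.span {X (.inr true) * X (.inr false)}) (pderiv (.inl i) f) =
      0 := by
  rw [Ideal.Quotient.mkₐ_eq_mk, Ideal.Quotient.eq_zero_iff_mem] at hf ⊢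
  obtain ⟨c, rfl⟩ := Ideal.mem_span_singleton'.1 hf
  have hxy : pderiv (.inl i) (X (.inr true) * X (.inr false) : MvPolynomial (Fin n ⊕ Bool) k) =
      0 := by
    simp [Derivation.leibniz, pderiv_X]
  rw [Derivation.leibniz, hxy, smul_zero, zero_add, smul_eq_mul]
  exact Ideal.mul_mem_right _ _ (Ideal.mem_span_singleton_self _)

noncomputable def pderivZ (i : Fin n) : Derivation k (NodalRing k n) (NodalRing k n) :=
  Derivation.liftOfSurjective (Ideal.Quotient.mkₐ_surjective k _)
    fun _ => mkₐ_pderiv_inl_eq_zero i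

theorem pderivZ_var (i : Fin n) (w : Fin n ⊕ Bool) :
    pderivZ i (var w : NodalRing k n) = Ideal.Quotient.mk _ (pderiv (.inl i) (X w)) :=
  Derivation.liftOfSurjective_apply _ (fun _ => mkₐ_pderiv_inl_eq_zero i) (X w)

noncomputable def derivNormalization : Derivation k (NodalRing k n) (Normalization k n) where
  toLinearMap := ((Polynomial.derivative.restrictScalars k).prodMap
    (Polynomial.derivative.restrictScalars k)) ∘ₗ (nodalRingToNormalization k n).toLinearMap
  map_one_eq_zero' := by simp
  leibniz' a b := by
    refine Prod.ext ?_ ?_ <;> simp [smul_normalization_def, Polynomial.derivative_mul] <;> ring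

noncomputable def nodalDerivation :
    Derivation k (NodalRing k n) (Normalization k n × (Fin n → NodalRing k n)) :=
  derivNormalization.prod (Derivation.pi pderivZ)

@[simp]
theorem nodalDerivation_x : nodalDerivation 𝗑 = ((1, 0), 0) := by
  ext i <;> simp [nodalDerivation, derivNormalization, pderivZ_var, pderiv_X]

@[simp]
theorem nodalDerivation_y : nodalDerivation 𝗒 = ((0, 1), 0) := by
  ext i <;> simp [nodalDerivation, derivNormalization, pderivZ_var, pderiv_X]

@[simp]
theorem nodalDerivation_z (j : Fin n) :
    nodalDerivation (var (.inl j) : NodalRing k n) = (0, Pi.single j 1) := by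
  ext i <;>
    simp [nodalDerivation, derivNormalization, pderivZ_var, pderiv_X, Pi.single_apply, eq_comm]

local notation "𝖽" => KaehlerDifferential.D k (NodalRing k n)

variable (k n) in
noncomputable def differentialsMap :
    Ω[NodalRing k n⁄k] →ₗ[NodalRing k n] Normalization k n × (Fin n → NodalRing k n) :=
  nodalDerivation.liftKaehlerDifferential

theorem differentialsMap_apply (a b : NodalRing k n) (c : Fin n → NodalRing k n) :
    differentialsMap k n (a • 𝖽 𝗑 + b • 𝖽 𝗒 + ∑ i, c i • 𝖽 (var (.inl i))) =
      (((ψ a).1, (ψ b).2), c) := by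
  refine Prod.ext (Prod.ext ?_ ?_) (funext fun i => ?_) <;>
    simp [differentialsMap, smul_normalization_def, Prod.fst_sum, Prod.snd_sum, Pi.single_apply]

theorem adjoin_range_var : Algebra.adjoin k (Set.range (var : _ → NodalRing k n)) = ⊤ := by
  rw [show Set.range (var : _ → NodalRing k n) = Ideal.Quotient.mkₐ k _ '' Set.range X by
      rw [← Set.range_comp]; rfl,
    Algebra.adjoin_image, MvPolynomial.adjoin_range_X, Algebra.map_top, AlgHom.range_eq_top]
  exact Ideal.Quotient.mkₐ_surjective k _

theorem exists_eq_differential_coords (ω : Ω[NodalRing k n⁄k]) :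
    ∃ (a b : NodalRing k n) (c : Fin n → NodalRing k n),
      ω = a • 𝖽 𝗑 + b • 𝖽 𝗒 + ∑ i, c i • 𝖽 (var (.inl i)) := by
  have hspan := KaehlerDifferential.span_D_image_eq_top_of_adjoin_eq_top
    (adjoin_range_var (k := k) (n := n))
  rw [← Set.range_comp] at hspan
  obtain ⟨c, hc⟩ :=
    (Submodule.mem_span_range_iff_exists_fun _).1 (hspan ▸ Submodule.mem_top : ω ∈ _)
  refine ⟨c (.inr true), c (.inr false), c ∘ .inl, ?_⟩
  rw [← hc, Fintype.sum_sum_type, Fintype.sum_bool]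
  simp only [Function.comp_apply]
  abel

theorem differentialsMap_surjective : Function.Surjective (differentialsMap k n) := by
  rintro ⟨⟨p, q⟩, c⟩
  have hsec (b : Bool) := RingHom.congr_fun (branch_comp_branchSection (k := k) (n := n) b)
  refine ⟨(Ideal.Quotient.mk _ (branchSection k n true p) : NodalRing k n) • 𝖽 𝗑 +
    (Ideal.Quotient.mk _ (branchSection k n false q) : NodalRing k n) • 𝖽 𝗒 +
    ∑ i, c i • 𝖽 (var (.inl i)), ?_⟩
  rw [differentialsMap_apply]
  exact congrArg (·, c) (Prod.ext (hsec true p) (hsec false q))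

theorem x_smul_D_y_add_y_smul_D_x : 𝗑 • 𝖽 𝗒 + 𝗒 • 𝖽 𝗑 = 0 := by
  rw [← Derivation.leibniz, x_mul_y, map_zero]

theorem ker_differentialsMap_le_span :
    LinearMap.ker (differentialsMap k n) ≤ Submodule.span (NodalRing k n) {𝗑 • 𝖽 𝗒} := by
  intro ω hω
  obtain ⟨a, b, c, rfl⟩ := exists_eq_differential_coords ω
  rw [LinearMap.mem_ker, differentialsMap_apply] at hω
  simp only [Prod.mk_eq_zero] at hω
  obtain ⟨⟨ha, hb⟩, rfl⟩ := hω
  obtain ⟨s, rfl⟩ := exists_eq_var_mul_of_branch_eq_zero (b := true) ha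
  obtain ⟨u, rfl⟩ := exists_eq_var_mul_of_branch_eq_zero (b := false) hb
  refine Submodule.mem_span_singleton.2 ⟨u - s, ?_⟩
  simp only [Bool.not_true, Bool.not_false]
  have hz : ∑ i, (0 : Fin n → NodalRing k n) i • 𝖽 (var (.inl i)) = 0 :=
    Finset.sum_eq_zero fun i _ => zero_smul (NodalRing k n) (𝖽 (var (.inl i)))
  rw [hz, add_zero]
  linear_combination (norm := module) (-s) • x_smul_D_y_add_y_smul_D_x (k := k) (n := n)

theorem span_le_torsion :
    Submodule.span (NodalRing k n) {𝗑 • 𝖽 𝗒} ≤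
      Submodule.torsion (NodalRing k n) Ω[NodalRing k n⁄k] := by
  rw [Submodule.span_le, Set.singleton_subset_iff, SetLike.mem_coe, Submodule.mem_torsion_iff]
  refine ⟨⟨_, x_add_y_mem_nonZeroDivisors⟩, ?_⟩
  show (𝗑 + 𝗒) • 𝗑 • 𝖽 𝗒 = 0
  have hxy : 𝗑 * 𝗒 = 0 := x_mul_y
  linear_combination (norm := module)
    𝗑 • x_smul_D_y_add_y_smul_D_x (k := k) (n := n) - hxy • 𝖽 𝗑 + hxy • 𝖽 𝗒

end NodalRing

/-- For `R = A[x,y]/(xy)` with `A = k[z_1,…,z_n]`: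
(1) the torsion submodule of `Ω_{R/k}` is generated by the class of `x dy`; and
(2) the quotient of `Ω_{R/k}` by its torsion submodule is isomorphic, as an `R`-module,
to `A[x] dx ⊕ A[y] dy ⊕ ⊕_{i=1}^n R dz_i`, where `R` acts on `A[x] dx ⊕ A[y] dy`
through the embedding `R → A[x] × A[y]` into the normalization. -/
theorem nodal_differentials_mod_torsion (k : Type*) [Field k] (n : ℕ) :
    letI : Module (NodalRing k n)
        (Polynomial (MvPolynomial (Fin n) k) × Polynomial (MvPolynomial (Fin n) k)) :=
      Module.compHom _ (nodalRingToNormalization k n).toRingHom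
    (Submodule.torsion (NodalRing k n) (Ω[NodalRing k n⁄k])
        = Submodule.span (NodalRing k n)
            {(Ideal.Quotient.mk _ (X (Sum.inr true)) : NodalRing k n) •
              (KaehlerDifferential.D k (NodalRing k n)
                (Ideal.Quotient.mk _ (X (Sum.inr false))))}) ∧
    Nonempty
      (((Ω[NodalRing k n⁄k]) ⧸ Submodule.torsion (NodalRing k n) (Ω[NodalRing k n⁄k]))
        ≃ₗ[NodalRing k n]
        ((Polynomial (MvPolynomial (Fin n) k) × Polynomial (MvPolynomial (Fin n) k))
          × (Fin n → NodalRing k n))) := by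
  have hker := NodalRing.ker_differentialsMap_le_span (k := k) (n := n)
  have hspan := NodalRing.span_le_torsion (k := k) (n := n)
  have htorsion : Submodule.torsion (NodalRing k n) Ω[NodalRing k n⁄k] =
      LinearMap.ker (NodalRing.differentialsMap k n) :=
    (Submodule.torsion_le_ker _).antisymm (hker.trans hspan)
  exact ⟨(htorsion.le.trans hker).antisymm hspan, ⟨(Submodule.quotEquivOfEq _ _ htorsion).trans
    ((NodalRing.differentialsMap k n).quotKerEquivOfSurjective
      NodalRing.differentialsMap_surjective)⟩⟩
end

section
/- Let $X$ be a quasi-projective, equidimensional, demi-normal scheme over an algebraically closed field of characteristic zero, with normalization $\pi\colon\bar X\to X$ and reduced preimage $\bar D$ of the conductor. Then there is an injection of sheaves $\mathcal{T}_X\hookrightarrow\pi_*\mathcal{T}_{\bar X}(-\log\bar D)$, where $\mathcal{T}_X=\mathcal{H}om_X(\Omega_X,\mathcal{O}_X)$ and $\mathcal{T}_{\bar X}(-\log\bar D)=\mathcal{H}om_{\bar X}(\Omega^{[1]}_{\bar X}(\log\bar D),\mathcal{O}_{\bar X})$. -/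
/-!
A derivation `δ` of `R` extends uniquely to the total quotient ring `K`, which is formally étale
over `R`. By Seidenberg's theorem this extension preserves the integral closure `S` of `R`:
through the Taylor homomorphism `a ↦ ∑ Dⁿa tⁿ / n!`, a common denominator `c` of the powers of an
integral `x` gives `c² (D x)ⁿ ∈ R` for all `n`, and `R` is noetherian. The conductor of `S/R` is
then stable under the derivation, and so is its radical, since in characteristic zero
`aⁿ ∈ I` implies `(D a)^(2n-1) ∈ I` for every `D`-stable ideal `I`.
-/

open Finset PowerSeries Nat IsLocalization

namespace Derivation

section Extension

variable {k R K : Type*} [CommRing k] [CommRing R] [CommRing K] [Algebra k R] [Algebra R K]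
  [Algebra k K] [IsScalarTower k R K] [Algebra.FormallyEtale R K]

open KaehlerDifferential

noncomputable def extendOfFormallyEtale (d : Derivation k R K) : Derivation k K K :=
  (LinearMap.liftBaseChange K d.liftKaehlerDifferential ∘ₗ
    (tensorKaehlerEquivOfFormallyEtale k R K).symm.toLinearMap).compDer (D k K)

theorem extendOfFormallyEtale_algebraMap (d : Derivation k R K) (r : R) :
    d.extendOfFormallyEtale (algebraMap R K r) = d r := by
  simp [extendOfFormallyEtale, tensorKaehlerEquivOfFormallyEtale_symm_D_algebraMap]

end Extension

theorem iterate_leibniz {R A : Type*} [CommSemiring R] [CommSemiring A] [Algebra R A]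
    (D : Derivation R A A) (n : ℕ) (a b : A) :
    D^[n] (a * b) = ∑ ij ∈ antidiagonal n, n.choose ij.1 • (D^[ij.1] a * D^[ij.2] b) := by
  induction n with
  | zero => simp
  | succ n ih =>
    rw [sum_antidiagonal_choose_succ_nsmul (M := A) (fun i j => D^[i] a * D^[j] b) n]
    simp only [Function.iterate_succ_apply', ih, map_sum, map_nsmul, leibniz, smul_eq_mul,
      smul_add, sum_add_distrib]
    congr 1
    refine sum_congr rfl fun ⟨i, j⟩ hij => ?_
    rw [n.choose_symm_of_eq_add (mem_antidiagonal.1 hij).symm]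
    ring

section Taylor

variable {k A : Type*} [Field k] [CharZero k] [CommRing A] [Algebra k A]

noncomputable def taylor (D : Derivation k A A) : A →+* A⟦X⟧ where
  toFun a := PowerSeries.mk fun n => (n ! : k)⁻¹ • D^[n] a
  map_one' := by
    ext (_ | n)
    · simp
    · simp [coeff_one, Function.iterate_succ_apply, iterate_map_zero]
  map_mul' a b := by
    ext n
    rw [coeff_mul, coeff_mk, iterate_leibniz, smul_sum]
    refine sum_congr rfl fun ⟨i, j⟩ hij => ?_
    obtain rfl := mem_antidiagonal.1 hij
    simp only [coeff_mk, smul_mul_smul_comm, ← Nat.cast_smul_eq_nsmul k, smul_smul]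
    congr 1
    have hi : (i ! : k) ≠ 0 := Nat.cast_ne_zero.2 (factorial_ne_zero i)
    have hj : (j ! : k) ≠ 0 := Nat.cast_ne_zero.2 (factorial_ne_zero j)
    have hij : ((i + j)! : k) ≠ 0 := Nat.cast_ne_zero.2 (factorial_ne_zero (i + j))
    rw [Nat.cast_add_choose]
    field_simp
  map_zero' := by ext; simp [iterate_map_zero]
  map_add' a b := by ext; simp [iterate_map_add]

variable (D : Derivation k A A)

theorem coeff_taylor (a : A) (n : ℕ) : coeff n (D.taylor a) = (n ! : k)⁻¹ • D^[n] a := by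
  simp [taylor]

@[simp]
theorem constantCoeff_taylor (a : A) : constantCoeff (D.taylor a) = a := by
  simp [← coeff_zero_eq_constantCoeff_apply, coeff_taylor]

@[simp]
theorem coeff_one_taylor (a : A) : coeff 1 (D.taylor a) = D a := by
  simp [coeff_taylor]

theorem taylor_map {B : Type*} [CommRing B] [Algebra k B] (D' : Derivation k B B) (f : A →ₐ[k] B)
    (hf : ∀ a, D' (f a) = f (D a)) (a : A) : D'.taylor (f a) = map f (D.taylor a) := by
  ext n
  have hfn (a : A) : D'^[n] (f a) = f (D^[n] a) :=
    (Function.Semiconj.iterate_right (fun a => (hf a).symm) n a).symm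
  simp [coeff_taylor, hfn]

end Taylor

end Derivation

theorem PowerSeries.coeff_mul_pow_of_constantCoeff_eq_zero {A : Type*} [CommSemiring A]
    (f g : A⟦X⟧) (hg : constantCoeff g = 0) (n : ℕ) :
    coeff n (f * g ^ n) = constantCoeff f * coeff 1 g ^ n := by
  obtain ⟨g, rfl⟩ := X_dvd_iff.2 hg
  have hXn := coeff_X_pow_mul (f * g ^ n) n 0
  rw [zero_add] at hXn
  rw [mul_pow, mul_left_comm, hXn, coeff_zero_eq_constantCoeff_apply, map_mul, map_pow,
    show coeff 1 (X * g) = coeff 0 g from coeff_succ_X_mul 0 g, coeff_zero_eq_constantCoeff_apply]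

section Integrality

variable {R K : Type*} [CommRing R] [CommRing K] [Algebra R K] (M : Submonoid R)
  [IsLocalization M K]

theorem IsIntegral.exists_isInteger_smul_pow {x : K} (hx : IsIntegral R x) :
    ∃ c ∈ M, ∀ n : ℕ, IsInteger R (c • x ^ n) := by
  obtain ⟨c, hcM, hc⟩ := FractionalIdeal.isFractional_of_fg (S := M) hx.fg_adjoin_singleton
  exact ⟨c, hcM, fun n => hc _ (pow_mem (Algebra.self_mem_adjoin_singleton R x) n)⟩

theorem isIntegral_of_forall_isInteger_smul_pow [IsNoetherianRing R] {c : R} (hc : c ∈ M)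
    {y : K} (h : ∀ n : ℕ, IsInteger R (c • y ^ n)) : IsIntegral R y := by
  set u : K := ↑(map_units K ⟨c, hc⟩).unit⁻¹
  have hu : algebraMap R K c * u = 1 := (map_units K ⟨c, hc⟩).mul_val_inv
  have hle : Subalgebra.toSubmodule (Algebra.adjoin R {y}) ≤ Submodule.span R {u} := by
    rw [Algebra.adjoin_eq_span, Submodule.span_le]
    rintro _ hz
    obtain ⟨n, rfl⟩ := Submonoid.mem_closure_singleton.1 hz
    obtain ⟨r, hr⟩ := h n
    refine Submodule.mem_span_singleton.2 ⟨r, ?_⟩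
    rw [Algebra.smul_def, hr, Algebra.smul_def, mul_right_comm, hu, one_mul]
  exact .of_mem_of_fg _ ((Submodule.fg_span_singleton u).of_le hle) _
    (Algebra.self_mem_adjoin_singleton R y)

end Integrality

theorem Derivation.isIntegral_apply {k R K : Type*} [Field k] [CharZero k] [CommRing R]
    [CommRing K] [Algebra k R] [Algebra R K] [Algebra k K] [IsScalarTower k R K]
    [IsNoetherianRing R] (M : Submonoid R) [IsLocalization M K] (D : Derivation k K K)
    (δ : Derivation k R R) (hD : ∀ r, D (algebraMap R K r) = algebraMap R K (δ r)) {x : K}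
    (hx : IsIntegral R x) : IsIntegral R (D x) := by
  obtain ⟨c, hcM, hc⟩ := hx.exists_isInteger_smul_pow M
  refine isIntegral_of_forall_isInteger_smul_pow M (mul_mem hcM hcM) fun n => ?_
  set cK := algebraMap R K c
  have hT : ∀ z, IsInteger R z → D.taylor z ∈ (map (algebraMap R K)).range := by
    rintro _ ⟨r, rfl⟩
    exact ⟨δ.taylor r, (δ.taylor_map D (IsScalarTower.toAlgHom k R K) hD r).symm⟩
  have hC : ∀ z, IsInteger R z → C z ∈ (map (algebraMap R K)).range := by
    rintro _ ⟨r, rfl⟩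
    exact ⟨C r, map_C _ _⟩
  have hc' : ∀ m, IsInteger R (cK * x ^ m) := by simpa only [Algebra.smul_def] using hc
  -- The `n`-th coefficient of this series is `c² (D x)ⁿ`; expanding the binomial writes it
  -- through the series `taylor (c xᵐ)`, which have coefficients in `R`.
  have hP : C cK * D.taylor cK * (D.taylor x - C x) ^ n ∈ (map (algebraMap R K)).range := by
    rw [sub_pow, Finset.mul_sum]
    refine sum_mem fun m _ => ?_
    have : C cK * D.taylor cK * ((-1) ^ (m + n) * D.taylor x ^ m * C x ^ (n - m) * n.choose m)
        = D.taylor (cK * x ^ m) * C (cK * x ^ (n - m)) * ((-1) ^ (m + n) * n.choose m) := by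
      simp only [map_mul, map_pow]; ring
    rw [this]
    exact mul_mem (mul_mem (hT _ (hc' m)) (hC _ (hc' _)))
      (mul_mem (pow_mem (neg_mem (one_mem _)) _) (natCast_mem _ _))
  obtain ⟨p, hp⟩ := hP
  refine ⟨coeff n p, ?_⟩
  rw [← coeff_map, hp, coeff_mul_pow_of_constantCoeff_eq_zero _ _ (by simp)]
  simp [cK, Algebra.smul_def]

def Derivation.restrict {k R K : Type*} [CommRing k] [CommRing R] [CommRing K] [Algebra k R]
    [Algebra R K] [Algebra k K] [IsScalarTower k R K] (D : Derivation k K K) (S : Subalgebra R K)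
    (hS : ∀ x ∈ S, D x ∈ S) : Derivation k S S where
  toFun x := ⟨D x, hS x x.2⟩
  map_add' x y := Subtype.ext (D.map_add x y)
  map_smul' c x := Subtype.ext (D.map_smul c x)
  map_one_eq_zero' := Subtype.ext D.map_one_eq_zero
  leibniz' x y := Subtype.ext (D.leibniz x y)

section Conductor

variable {R S : Type*} [CommRing R] [CommRing S] [Algebra R S]

variable (R S) in
def Algebra.conductor : Ideal S where
  carrier := {a | ∀ b, a * b ∈ (algebraMap R S).range}
  zero_mem' b := ⟨0, by simp⟩
  add_mem' ha hb c := by simpa only [add_mul] using add_mem (ha c) (hb c)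
  smul_mem' c a ha b := by simpa only [smul_eq_mul, mul_left_comm, mul_assoc] using ha (c * b)

theorem Algebra.mem_conductor_iff {a : S} :
    a ∈ conductor R S ↔ ∀ b, a * b ∈ (algebraMap R S).range :=
  Iff.rfl

theorem Subalgebra.mem_conductor_iff {K : Type*} [CommRing K] [Algebra R K] (S : Subalgebra R K)
    {s : S} : s ∈ Algebra.conductor R S ↔ ∀ b : S, ∃ r : R, algebraMap R K r = s * b := by
  simp only [Algebra.mem_conductor_iff, RingHom.mem_range, Subtype.ext_iff]
  rfl

theorem Derivation.apply_mem_conductor {A : Type*} [CommRing A] [Algebra A S]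
    (D : Derivation A S S) (hD : ∀ r, D (algebraMap R S r) ∈ (algebraMap R S).range)
    {a : S} (ha : a ∈ Algebra.conductor R S) : D a ∈ Algebra.conductor R S := by
  intro b
  obtain ⟨r, hr⟩ := ha b
  have : D a * b = D (algebraMap R S r) - a * D b := by
    rw [hr, leibniz, smul_eq_mul, smul_eq_mul]; ring
  rw [this]
  exact sub_mem (hD r) (ha (D b))

end Conductor

section Radical

variable {A : Type*} [CommRing A] {I : Ideal A}

theorem Ideal.mem_of_natCast_mul_mem (k : Type*) [Field k] [CharZero k] [Algebra k A] {m : ℕ}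
    (hm : m ≠ 0) {y : A} (hy : (m : A) * y ∈ I) : y ∈ I := by
  have hu : IsUnit (m : A) := by
    simpa using ((Nat.cast_ne_zero (R := k)).2 hm).isUnit.map (algebraMap k A)
  exact (I.unit_mul_mem_iff_mem hu).1 hy

variable {k : Type*} [Field k] [CharZero k] [Algebra k A] (D : Derivation k A A)

theorem Derivation.pow_mul_pow_apply_mem_of_pow_mem (hI : ∀ y ∈ I, D y ∈ I) {a : A} {n : ℕ}
    (ha : a ^ n ∈ I) : ∀ j m, m + j + 1 = n → a ^ m * D a ^ (2 * j + 1) ∈ I := by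
  intro j
  induction j with
  | zero =>
    rintro m rfl
    have h := hI _ ha
    rw [leibniz_pow, nsmul_eq_mul, smul_eq_mul] at h
    simpa using I.mem_of_natCast_mul_mem k (Nat.succ_ne_zero _) h
  | succ j ih =>
    intro m hm
    have h := ih (m + 1) (by omega)
    -- Differentiate `h` and multiply by `D a`: the unwanted term is a multiple of `h` itself.
    have hder : ((m + 1 : ℕ) : A) * (a ^ m * D a ^ (2 * (j + 1) + 1))
        = D a * D (a ^ (m + 1) * D a ^ (2 * j + 1))
          - ((2 * j + 1 : ℕ) : A) * D (D a) * (a ^ (m + 1) * D a ^ (2 * j + 1)) := by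
      simp only [leibniz, leibniz_pow, smul_eq_mul, nsmul_eq_mul, Nat.add_sub_cancel]
      push_cast
      ring
    refine I.mem_of_natCast_mul_mem k m.succ_ne_zero ?_
    rw [hder]
    exact sub_mem (I.mul_mem_left _ (hI _ h)) (I.mul_mem_left _ h)

theorem Derivation.pow_apply_mem_of_pow_mem (hI : ∀ y ∈ I, D y ∈ I) {a : A} {n : ℕ} (hn : 0 < n)
    (ha : a ^ n ∈ I) : D a ^ (2 * n - 1) ∈ I := by
  simpa [show 2 * (n - 1) + 1 = 2 * n - 1 by omega] using
    D.pow_mul_pow_apply_mem_of_pow_mem hI ha (n - 1) 0 (by omega)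

end Radical

theorem tangent_field_lifts_to_log_tangent_of_normalization_general
    (k R K : Type*) [Field k] [CharZero k]
    [CommRing R] [Algebra k R] [IsNoetherianRing R]
    [CommRing K] [Algebra R K] [IsLocalization (nonZeroDivisors R) K]
    [Algebra k K] [IsScalarTower k R K]
    (δ : Derivation k R R) :
    ∃ δ' : Derivation k (integralClosure R K) (integralClosure R K),
      (∀ r : R, (δ' (algebraMap R (integralClosure R K) r) : K)
          = algebraMap R K (δ r)) ∧
      (∀ a : integralClosure R K,
        (∃ m : ℕ, 0 < m ∧ ∀ b : integralClosure R K,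
            ∃ r : R, algebraMap R K r = (a : K) ^ m * b) →
        (∃ m : ℕ, 0 < m ∧ ∀ b : integralClosure R K,
            ∃ r : R, algebraMap R K r = (δ' a : K) ^ m * b)) := by
  have : Algebra.FormallyEtale R K := .of_isLocalization (nonZeroDivisors R)
  let D := ((Algebra.linearMap R K).compDer δ).extendOfFormallyEtale
  have hD (r : R) : D (algebraMap R K r) = algebraMap R K (δ r) :=
    Derivation.extendOfFormallyEtale_algebraMap _ r
  let δ' := D.restrict (integralClosure R K) fun _ hx =>
    D.isIntegral_apply (nonZeroDivisors R) δ hD hx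
  have hδ' (r : R) : δ' (algebraMap R _ r) ∈ (algebraMap R (integralClosure R K)).range :=
    ⟨δ r, Subtype.ext (hD r).symm⟩
  refine ⟨δ', hD, fun a ⟨m, hm, ha⟩ => ⟨2 * m - 1, by omega, ?_⟩⟩
  have hδ'a := δ'.pow_apply_mem_of_pow_mem (fun _ => δ'.apply_mem_conductor hδ') hm
    ((Subalgebra.mem_conductor_iff _).2 (by simpa using ha))
  simpa using (Subalgebra.mem_conductor_iff _).1 hδ'a

/-- Affine-local form of: for a quasi-projective, equidimensional, demi-normal scheme
`X` over an algebraically closed field `k` of characteristic zero, with normalization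
`π : X̄ → X` and `D̄` the reduced preimage of the conductor, there is an injection
`𝒯_X ↪ π_* 𝒯_{X̄}(-log D̄)`.

Here `R` is the (reduced, noetherian, finite-type) coordinate ring of `X`, `K` its total
quotient ring, `S = integralClosure R K` the normalization, and `C` the conductor.
A tangent vector field on `X` is a `k`-derivation `δ : R → R`; the statement is that it
extends (necessarily uniquely, whence the injectivity) to a derivation `δ'` of the
normalization `S` which moreover preserves the radical of the conductor — i.e. `δ'` is a
logarithmic vector field along `D̄`, a section of `π_* 𝒯_{X̄}(-log D̄)`. -/
theorem tangent_field_lifts_to_log_tangent_of_normalization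
    (k R K : Type*) [Field k] [CharZero k] [IsAlgClosed k]
    [CommRing R] [Algebra k R] [IsReduced R] [IsNoetherianRing R]
    [Algebra.FiniteType k R]
    [CommRing K] [Algebra R K] [IsLocalization (nonZeroDivisors R) K]
    [Algebra k K] [IsScalarTower k R K]
    (δ : Derivation k R R) :
    ∃ δ' : Derivation k (integralClosure R K) (integralClosure R K),
      (∀ r : R, (δ' (algebraMap R (integralClosure R K) r) : K)
          = algebraMap R K (δ r)) ∧
      (∀ a : integralClosure R K,
        (∃ m : ℕ, 0 < m ∧ ∀ b : integralClosure R K,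
            ∃ r : R, algebraMap R K r = (a : K) ^ m * b) →
        (∃ m : ℕ, 0 < m ∧ ∀ b : integralClosure R K,
            ∃ r : R, algebraMap R K r = (δ' a : K) ^ m * b)) :=
  tangent_field_lifts_to_log_tangent_of_normalization_general k R K δ
end
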